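/- arXiv:0802.3313 — 3 statements merged into one kernel-verified Lean document; each statement's English description precedes it below -/
import Mathlib

section
/- If {x_1, …, x_n} is a periodic orbit of the map f_a(x) = x^{a/x} on [1, ∞) (so f_a(x_i) = x_{i+1} cyclically and all x_i > 1), then the geometric mean (x_1 · x_2 ⋯ x_n)^{1/n} equals a. -/
/-!
Taking logarithms, the orbit relation `x_{i+1} = x_i ^ (a / x_i)` reads
`x_i · log x_{i+1} = a · log x_i`. Multiplying these `n + 1` identities, the product of the
`log x_{i+1}` equals that of the `log x_i` (the indices are merely permuted) and is nonzero since
every `x_i > 1`; cancelling it leaves `∏ x_i = a ^ (n + 1)`.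
-/

open Real

lemma mul_log_exp_div_mul_log {x : ℝ} (hx : 0 < x) (a : ℝ) :
    x * log (exp (a / x * log x)) = a * log x := by
  rw [log_exp]
  field_simp

lemma prod_eq_pow_card_of_mul_log_perm {ι : Type*} [Fintype ι] (σ : Equiv.Perm ι) (a : ℝ)
    (x : ι → ℝ) (hlog : ∀ i, log (x i) ≠ 0) (h : ∀ i, x i * log (x (σ i)) = a * log (x i)) :
    ∏ i, x i = a ^ Fintype.card ι := by
  have hprod : (∏ i, x i) * ∏ i, log (x i) = a ^ Fintype.card ι * ∏ i, log (x i) := by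
    calc (∏ i, x i) * ∏ i, log (x i) = (∏ i, x i) * ∏ i, log (x (σ i)) := by
          rw [Equiv.prod_comp σ fun i => log (x i)]
      _ = ∏ i, a * log (x i) := by rw [← Finset.prod_mul_distrib]; exact Fintype.prod_congr _ _ h
      _ = a ^ Fintype.card ι * ∏ i, log (x i) := by
          rw [Finset.prod_mul_distrib, Finset.prod_const, Finset.card_univ]
  exact mul_right_cancel₀ (Finset.prod_ne_zero_iff.mpr fun i _ => hlog i) hprod

/-- If `x_0, …, x_n` is a periodic orbit of the map `f_a(x) = x^(a/x)` on `(1, ∞)`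
(so `f_a(x_i) = x_{i+1}` cyclically and all `x_i > 1`), then the geometric mean
`(x_0 ⋯ x_n)^(1/(n+1))` equals `a`. -/
theorem stmt_3 (a : ℝ) (ha : 0 < a) (n : ℕ) (x : Fin (n + 1) → ℝ)
    (hx : ∀ i, 1 < x i)
    (horbit : ∀ i : Fin (n + 1), Real.exp ((a / x i) * Real.log (x i)) = x (i + 1)) :
    (∏ i, x i) ^ ((1 : ℝ) / (n + 1)) = a := by
  have hprod : ∏ i, x i = a ^ (n + 1) := by
    simpa using prod_eq_pow_card_of_mul_log_perm (Equiv.addRight 1) a x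
      (fun i => (log_pos (hx i)).ne') fun i => by
        rw [Equiv.coe_addRight, ← horbit i]
        exact mul_log_exp_div_mul_log (one_pos.trans (hx i)) a
  rw [hprod, one_div, ← Nat.cast_add_one, pow_rpow_inv_natCast ha.le n.succ_ne_zero]
end

section
/- The derivative of f_a(x) = x^{a/x} at its fixed point x = a equals 1 − log a; consequently the fixed point x = a is attracting (|f_a'(a)| < 1) exactly when 1 < a < e², and |f_a'(a)| = 1 when a = e². -/
open Real

theorem hasDerivAt_exp_div_mul_log (a : ℝ) {x : ℝ} (hx : x ≠ 0) :
    HasDerivAt (fun y : ℝ => exp ((a / y) * log y))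
      (exp ((a / x) * log x) * (a * (1 - log x) / x ^ 2)) x := by
  have hdiv : HasDerivAt (fun y : ℝ => a / y) (-a / x ^ 2) x := by
    simpa [div_eq_mul_inv, neg_div] using (hasDerivAt_inv hx).const_mul a
  convert (hdiv.mul (hasDerivAt_log hx)).exp using 1
  · rfl
  · show _ = exp ((a / x) * log x) * _
    field_simp
    ring

theorem hasDerivAt_exp_div_mul_log_self {a : ℝ} (ha : 0 < a) :
    HasDerivAt (fun x : ℝ => exp ((a / x) * log x)) (1 - log a) a := by
  convert hasDerivAt_exp_div_mul_log a ha.ne' using 1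
  rw [div_self ha.ne', one_mul, exp_log ha]
  field_simp

theorem abs_one_sub_log_lt_one_iff {a : ℝ} (ha : 0 < a) :
    |1 - log a| < 1 ↔ 1 < a ∧ a < exp 2 := by
  rw [abs_lt, ← log_pos_iff ha.le, ← log_lt_iff_lt_exp ha]
  constructor <;> rintro ⟨h₁, h₂⟩ <;> constructor <;> linarith

/-- The derivative of `f_a(x) = x^(a/x) = exp((a/x)·log x)` at its fixed point `x = a`
equals `1 - log a`; consequently the fixed point is attracting (`|f_a'(a)| < 1`)
exactly when `1 < a < e²`, and `|f_a'(a)| = 1` when `a = e²`. -/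
theorem stmt_5 (a : ℝ) (ha : 1 < a) :
    HasDerivAt (fun x : ℝ => Real.exp ((a / x) * Real.log x)) (1 - Real.log a) a ∧
    (|1 - Real.log a| < 1 ↔ 1 < a ∧ a < Real.exp 2) ∧
    (a = Real.exp 2 → |1 - Real.log a| = 1) := by
  have ha₀ : 0 < a := zero_lt_one.trans ha
  refine ⟨hasDerivAt_exp_div_mul_log_self ha₀, abs_one_sub_log_lt_one_iff ha₀, ?_⟩
  rintro rfl
  norm_num [log_exp]
end

section
/- Let f(x) = x^x and Sf = f'''/f' − (3/2)(f''/f')². Then there exists c ∈ (0, 1) such that Sf(x) > 0 for 0 < x < c and Sf(x) < 0 for c < x ≤ 1. -/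
open Real Set

noncomputable def Ee (x : ℝ) : ℝ := Real.exp (x * Real.log x)
noncomputable def uu (x : ℝ) : ℝ := Real.log x + 1
noncomputable def G1 (x : ℝ) : ℝ := uu x * Ee x
noncomputable def G2 (x : ℝ) : ℝ := (x⁻¹ + uu x ^ 2) * Ee x
noncomputable def G3 (x : ℝ) : ℝ :=
  (-(x ^ 2)⁻¹ + 3 * uu x * x⁻¹ + uu x ^ 3) * Ee x
noncomputable def hh (x : ℝ) : ℝ := 2 * uu x + 3 + x ^ 2 * uu x ^ 4

lemma hasDerivAt_uu {x : ℝ} (hx : 0 < x) : HasDerivAt uu x⁻¹ x := by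
  exact (Real.hasDerivAt_log hx.ne').add_const 1

lemma hasDerivAt_Ee {x : ℝ} (hx : 0 < x) : HasDerivAt Ee (uu x * Ee x) x := by
  have hg : HasDerivAt (fun y : ℝ => y * Real.log y) (uu x) x := by
    have h := (hasDerivAt_id' x).mul (Real.hasDerivAt_log hx.ne')
    refine h.congr_deriv ?_
    simp [uu, hx.ne']
  have h2 := hg.exp
  rw [mul_comm] at h2
  exact h2

lemma hasDerivAt_G1 {x : ℝ} (hx : 0 < x) : HasDerivAt G1 (G2 x) x := by
  have h := (hasDerivAt_uu hx).mul (hasDerivAt_Ee hx)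
  have he : G2 x = x⁻¹ * Ee x + uu x * (uu x * Ee x) := by
    simp only [G2]; ring
  rw [he]; exact h

lemma hasDerivAt_G2 {x : ℝ} (hx : 0 < x) : HasDerivAt G2 (G3 x) x := by
  have h1 : HasDerivAt (fun y : ℝ => y⁻¹ + uu y ^ 2)
      (-(x ^ 2)⁻¹ + 2 * uu x * x⁻¹) x := by
    have hinv := hasDerivAt_inv hx.ne'
    have hsq := (hasDerivAt_uu hx).pow 2
    have := hinv.add hsq
    refine this.congr_deriv ?_
    push_cast
    ring
  have h := h1.mul (hasDerivAt_Ee hx)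
  have he : G3 x = (-(x ^ 2)⁻¹ + 2 * uu x * x⁻¹) * Ee x
      + (x⁻¹ + uu x ^ 2) * (uu x * Ee x) := by
    simp only [G3]; ring
  rw [he]; exact h

lemma deriv_Ee {x : ℝ} (hx : 0 < x) : deriv Ee x = G1 x :=
  (hasDerivAt_Ee hx).deriv

lemma deriv2_Ee {x : ℝ} (hx : 0 < x) : deriv (deriv Ee) x = G2 x := by
  have hev : deriv Ee =ᶠ[nhds x] G1 := by
    filter_upwards [IsOpen.mem_nhds isOpen_Ioi hx] with y hy
    exact deriv_Ee hy
  rw [hev.deriv_eq]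
  exact (hasDerivAt_G1 hx).deriv

lemma deriv3_Ee {x : ℝ} (hx : 0 < x) : deriv (deriv (deriv Ee)) x = G3 x := by
  have hev : deriv (deriv Ee) =ᶠ[nhds x] G2 := by
    filter_upwards [IsOpen.mem_nhds isOpen_Ioi hx] with y hy
    exact deriv2_Ee hy
  rw [hev.deriv_eq]
  exact (hasDerivAt_G2 hx).deriv

lemma hasDerivAt_hh {x : ℝ} (hx : 0 < x) :
    HasDerivAt hh (2 * x⁻¹ + 2 * x * uu x ^ 4 + 4 * x * uu x ^ 3) x := by
  have h1 := (hasDerivAt_uu hx).const_mul 2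
  have h2 := ((hasDerivAt_pow 2 x).mul ((hasDerivAt_uu hx).pow 4))
  have h := (h1.add_const 3).add h2
  refine h.congr_deriv ?_
  have hx' : x ≠ 0 := hx.ne'
  push_cast
  simp only [Pi.pow_apply]
  field_simp
  ring

lemma hh_deriv_pos {x : ℝ} (hx : 0 < x) (hx1 : x < 1) :
    0 < 2 * x⁻¹ + 2 * x * uu x ^ 4 + 4 * x * uu x ^ 3 := by
  set u := uu x with hu
  have hxi : 0 < x⁻¹ := inv_pos.mpr hx
  rcases le_or_gt 0 u with h0 | h0
  · have h3 : 0 ≤ u ^ 3 := pow_nonneg h0 3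
    have h4 : 0 ≤ u ^ 4 := pow_nonneg h0 4
    have := mul_nonneg hx.le h3
    have := mul_nonneg hx.le h4
    nlinarith
  · rcases le_or_gt u (-2) with h2 | h2
    · have key : 0 ≤ u ^ 3 * (u + 2) := by
        nlinarith [mul_nonneg (sq_nonneg u) (show (0:ℝ) ≤ u * (u + 2) by nlinarith)]
      nlinarith
    · -- -2 < u < 0, so log x < -1, so x < exp (-1) < 1/2
      have hlog : Real.log x < -1 := by simp only [hu, uu] at h0; linarith
      have hxlt : x < Real.exp (-1) := by
        calc x = Real.exp (Real.log x) := (Real.exp_log hx).symm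
        _ < Real.exp (-1) := Real.exp_lt_exp.mpr hlog
      have he1 : (2 : ℝ) < Real.exp 1 := by
        have := Real.exp_one_gt_d9; linarith
      have hxhalf : x < 1 / 2 := by
        have : Real.exp (-1) = (Real.exp 1)⁻¹ := Real.exp_neg 1
        rw [this] at hxlt
        have : (Real.exp 1)⁻¹ < 1 / 2 := by
          rw [inv_lt_comm₀ (by positivity) (by norm_num)]
          linarith
        linarith
      have h16 : 0 ≤ 16 * (u ^ 4 + 2 * u ^ 3) + 27 := by
        nlinarith [sq_nonneg (2 * u + 3), sq_nonneg (2 * u - 1)]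
      have key : 0 < 2 + 2 * x ^ 2 * u ^ 4 + 4 * x ^ 2 * u ^ 3 := by
        nlinarith [mul_nonneg (sq_nonneg x) h16, sq_nonneg x]
      have hrw : 2 * x⁻¹ + 2 * x * u ^ 4 + 4 * x * u ^ 3
          = x⁻¹ * (2 + 2 * x ^ 2 * u ^ 4 + 4 * x ^ 2 * u ^ 3) := by
        field_simp
      rw [hrw]
      exact mul_pos hxi key

lemma hh_strictMono : StrictMonoOn hh (Set.Ioc 0 1) := by
  apply strictMonoOn_of_deriv_pos (convex_Ioc 0 1)
  · exact fun x hx => (hasDerivAt_hh hx.1).continuousAt.continuousWithinAt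
  · intro x hx
    rw [interior_Ioc] at hx
    rw [(hasDerivAt_hh hx.1).deriv]
    exact hh_deriv_pos hx.1 hx.2

/-- The Schwarzian derivative `Sf = f'''/f' - (3/2)(f''/f')²` of `f(x) = x^x = exp(x log x)`
changes sign exactly once in `(0, 1]`: there is `c ∈ (0, 1)` with `Sf > 0` on `(0, c)` and
`Sf < 0` on `(c, 1]` (wherever `f' ≠ 0`, so that the Schwarzian is defined). -/
theorem stmt_8 (f : ℝ → ℝ) (hf : ∀ x, f x = Real.exp (x * Real.log x)) :
    ∃ c ∈ Set.Ioo (0 : ℝ) 1,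
      (∀ x ∈ Set.Ioo (0 : ℝ) c,
        deriv f x ≠ 0 →
        0 < deriv (deriv (deriv f)) x / deriv f x
              - (3 / 2) * (deriv (deriv f) x / deriv f x) ^ 2) ∧
      (∀ x ∈ Set.Ioc c (1 : ℝ),
        deriv f x ≠ 0 →
        deriv (deriv (deriv f)) x / deriv f x
              - (3 / 2) * (deriv (deriv f) x / deriv f x) ^ 2 < 0) := by
  have hfE : f = Ee := funext hf
  subst hfE
  -- endpoint values of hh
  have ha0 : (0 : ℝ) < Real.exp (-3) := Real.exp_pos _
  have ha1 : Real.exp (-3) < 1 := by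
    rw [Real.exp_lt_one_iff]; norm_num
  have hhalo : hh (Real.exp (-3)) < 0 := by
    have hlog : Real.log (Real.exp (-3)) = -3 := Real.log_exp _
    have he3 : (4 : ℝ) < Real.exp 3 := by
      have := Real.add_one_lt_exp (by norm_num : (3:ℝ) ≠ 0); linarith
    have hlt : Real.exp (-3) < 1 / 4 := by
      rw [Real.exp_neg]
      rw [inv_lt_comm₀ (by positivity) (by norm_num)]
      linarith
    have : hh (Real.exp (-3)) = -1 + 16 * Real.exp (-3) ^ 2 := by
      simp only [hh, uu, hlog]; ring
    rw [this]
    nlinarith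
  have hh1 : 0 < hh 1 := by
    simp only [hh, uu, Real.log_one]; norm_num
  -- root of hh by IVT
  have hcont : ContinuousOn hh (Set.Icc (Real.exp (-3)) 1) := fun x hx =>
    (hasDerivAt_hh (lt_of_lt_of_le ha0 hx.1)).continuousAt.continuousWithinAt
  have hivt := intermediate_value_Ioo ha1.le hcont
  have h0mem : (0 : ℝ) ∈ Set.Ioo (hh (Real.exp (-3))) (hh 1) := ⟨hhalo, hh1⟩
  obtain ⟨c, hcmem, hhc⟩ := hivt h0mem
  have hc0 : 0 < c := lt_trans ha0 hcmem.1
  have hc1 : c < 1 := hcmem.2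
  have hcIoc : c ∈ Set.Ioc (0 : ℝ) 1 := ⟨hc0, hc1.le⟩
  refine ⟨c, ⟨hc0, hc1⟩, ?_, ?_⟩
  · intro x hx hne
    have hx0 : 0 < x := hx.1
    rw [deriv_Ee hx0] at hne
    rw [deriv3_Ee hx0, deriv_Ee hx0, deriv2_Ee hx0]
    have hu : uu x ≠ 0 := by
      intro h; apply hne; simp [G1, h]
    have hE : Ee x ≠ 0 := (Real.exp_pos _).ne'
    have key : G3 x / G1 x - 3 / 2 * (G2 x / G1 x) ^ 2
        = -(hh x) / (2 * x ^ 2 * uu x ^ 2) := by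
      simp only [G1, G2, G3, hh]
      field_simp
      ring
    rw [key]
    have hhx : hh x < 0 := by
      have := hh_strictMono ⟨hx0, (hx.2.trans hc1).le⟩ hcIoc hx.2
      linarith [hhc ▸ this]
    have hden : 0 < 2 * x ^ 2 * uu x ^ 2 := by positivity
    apply div_pos (by linarith) hden
  · intro x hx hne
    have hx0 : 0 < x := lt_trans hc0 hx.1
    rw [deriv_Ee hx0] at hne
    rw [deriv3_Ee hx0, deriv_Ee hx0, deriv2_Ee hx0]
    have hu : uu x ≠ 0 := by
      intro h; apply hne; simp [G1, h]
    have hE : Ee x ≠ 0 := (Real.exp_pos _).ne'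
    have key : G3 x / G1 x - 3 / 2 * (G2 x / G1 x) ^ 2
        = -(hh x) / (2 * x ^ 2 * uu x ^ 2) := by
      simp only [G1, G2, G3, hh]
      field_simp
      ring
    rw [key]
    have hhx : 0 < hh x := by
      have := hh_strictMono hcIoc ⟨hx0, hx.2⟩ hx.1
      linarith [hhc ▸ this]
    have hden : 0 < 2 * x ^ 2 * uu x ^ 2 := by positivity
    apply div_neg_of_neg_of_pos (by linarith) hden
end
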